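/- Let H and G be dependence-closed subgroups of a free group F. Then H ∩ G is dependence-closed. -/

import Mathlib

open scoped Monoid.Coprod

variable {F : Type*}

/-- The canonical homomorphism `φ_g : H ∗ ⟨x⟩ → F` from the free product of `H` with an
infinite cyclic group (the free group on one generator `x`), restricting to the inclusion
`H ↪ F` and sending `x` to `g`. -/
noncomputable def phi [Group F] (H : Subgroup F) (g : F) :
    (↥H ∗ FreeGroup Unit) →* F :=
  Monoid.Coprod.lift H.subtype (FreeGroup.lift fun _ => g)

/-- `g` depends on `H` (is algebraic over `H`) if `φ_g` is not injective. -/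
def Depends [Group F] (H : Subgroup F) (g : F) : Prop :=
  ¬ Function.Injective (phi H g)

/-- `dep H`: the set of elements of `F` that depend on `H`. -/
def depSet [Group F] (H : Subgroup F) : Set F := {g | Depends H g}

/-- `Dep H`: the subgroup generated by the elements that depend on `H`. -/
noncomputable def DepSubgroup [Group F] (H : Subgroup F) : Subgroup F :=
  Subgroup.closure (depSet H)

/-- The rank of a subgroup: the minimal cardinality of a generating set. For subgroups of
free groups this equals the cardinality of a free basis. -/
noncomputable def rk [Group F] (H : Subgroup F) : Cardinal :=
  ⨅ S : {S : Set F // Subgroup.closure S = H}, Cardinal.mk S.1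

/-!
`Dep` is monotone and inflationary. Every `h ∈ H` depends on `H`, since `x h⁻¹ ≠ 1` lies in the
kernel of `φ_h`. If `K ≤ H`, then `φ^K_g` factors through the map `K ∗ ⟨x⟩ → H ∗ ⟨x⟩` induced by
the inclusion, which is injective by the normal form theorem for free products, so every element
depending on `K` depends on `H`. Hence `Dep (H ⊓ G) ≤ Dep H ⊓ Dep G = H ⊓ G ≤ Dep (H ⊓ G)`.
-/

open Monoid Function

namespace Monoid.CoprodI

variable {ι : Type*} {G H : ι → Type*} [∀ i, Group (G i)] [∀ i, Group (H i)]

def Word.mapOfInjective (f : ∀ i, G i →* H i) (hf : ∀ i, Injective (f i)) (w : Word G) :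
    Word H where
  toList := w.toList.map fun l => ⟨l.1, f l.1 l.2⟩
  ne_one l hl := by
    obtain ⟨a, ha, rfl⟩ := List.mem_map.1 hl
    exact (map_ne_one_iff (f a.1) (hf a.1)).2 (w.ne_one a ha)
  chain_ne := (List.isChain_map _).2 w.chain_ne

theorem Word.prod_mapOfInjective (f : ∀ i, G i →* H i) (hf : ∀ i, Injective (f i))
    (w : Word G) :
    (w.mapOfInjective f hf).prod = lift (fun i => of.comp (f i)) w.prod := by
  simp [Word.prod, mapOfInjective, map_list_prod, List.map_map, Function.comp_def]

theorem lift_of_comp_injective (f : ∀ i, G i →* H i) (hf : ∀ i, Injective (f i)) :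
    Injective (lift fun i => (of : H i →* _).comp (f i)) := by
  classical
  refine (injective_iff_map_eq_one _).2 fun x hx => ?_
  obtain ⟨w, rfl⟩ := Word.equiv.symm.surjective x
  have hempty : w.mapOfInjective f hf = .empty :=
    Word.equiv.symm.injective ((w.prod_mapOfInjective f hf).trans hx)
  obtain rfl : w = .empty := Word.ext (List.map_eq_nil_iff.1 (congrArg Word.toList hempty))
  rfl

end Monoid.CoprodI

namespace Monoid.Coprod

universe u v u' v'

/-- `M ∗ N` as an indexed coproduct over `Bool`; the `ULift`s put both factors in one universe. -/
def boolFamily (M : Type u) (N : Type v) : Bool → Type (max u v)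
  | true => ULift.{v} M
  | false => ULift.{u} N

instance instGroupBoolFamily (M : Type u) (N : Type v) [Group M] [Group N] :
    ∀ b, Group (boolFamily M N b)
  | true => inferInstanceAs (Group (ULift M))
  | false => inferInstanceAs (Group (ULift N))

variable {M : Type u} {N : Type v} {M' : Type u'} {N' : Type v'}
  [Group M] [Group N] [Group M'] [Group N']

def toCoprodI : M ∗ N →* CoprodI (boolFamily M N) :=
  lift ((CoprodI.of (i := true)).comp MulEquiv.ulift.symm.toMonoidHom)
    ((CoprodI.of (i := false)).comp MulEquiv.ulift.symm.toMonoidHom)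

def ofCoprodI : CoprodI (boolFamily M N) →* M ∗ N :=
  CoprodI.lift fun
    | true => inl.comp MulEquiv.ulift.toMonoidHom
    | false => inr.comp MulEquiv.ulift.toMonoidHom

theorem ofCoprodI_toCoprodI (x : M ∗ N) : ofCoprodI (toCoprodI x) = x := by
  have : (ofCoprodI.comp toCoprodI : M ∗ N →* M ∗ N) = .id _ := by
    ext <;> rfl
  exact DFunLike.congr_fun this x

theorem toCoprodI_injective : Injective (toCoprodI : M ∗ N →* _) :=
  LeftInverse.injective ofCoprodI_toCoprodI

theorem map_injective {f : M →* M'} {g : N →* N'} (hf : Injective f) (hg : Injective g) :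
    Injective (map f g) := by
  let φ : ∀ b, boolFamily M N b →* boolFamily M' N' b
    | true => MulEquiv.ulift.symm.toMonoidHom.comp (f.comp MulEquiv.ulift.toMonoidHom)
    | false => MulEquiv.ulift.symm.toMonoidHom.comp (g.comp MulEquiv.ulift.toMonoidHom)
  have hφ : ∀ b, Injective (φ b)
    | true => ULift.up_injective.comp (hf.comp ULift.down_injective)
    | false => ULift.up_injective.comp (hg.comp ULift.down_injective)
  have hcomm : toCoprodI.comp (map f g) =
      (CoprodI.lift fun b => CoprodI.of.comp (φ b)).comp toCoprodI := by
    ext <;> rfl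
  refine Injective.of_comp (f := toCoprodI) ?_
  rw [← MonoidHom.coe_comp, hcomm, MonoidHom.coe_comp]
  exact (CoprodI.lift_of_comp_injective φ hφ).comp toCoprodI_injective

end Monoid.Coprod

section Dependence

variable [Group F] {H K : Subgroup F} {g : F}

theorem phi_comp_map_inclusion (hKH : K ≤ H) (g : F) :
    (phi H g).comp (Coprod.map (Subgroup.inclusion hKH) (.id _)) = phi K g := by
  ext <;> simp [phi]

theorem Depends.mono (hKH : K ≤ H) (h : Depends K g) : Depends H g := fun hinj =>
  h <| phi_comp_map_inclusion hKH g ▸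
    hinj.comp (Coprod.map_injective (Subgroup.inclusion_injective hKH) injective_id)

theorem depends_of_mem (hg : g ∈ H) : Depends H g := by
  intro hinj
  have hker : phi H g (Coprod.inr (FreeGroup.of ()) * (Coprod.inl ⟨g, hg⟩)⁻¹) = 1 := by
    simp [phi]
  have := congrArg Coprod.snd (hinj (hker.trans (map_one _).symm))
  simp at this

theorem le_depSubgroup (H : Subgroup F) : H ≤ DepSubgroup H := fun _ hg =>
  Subgroup.subset_closure (depends_of_mem hg)

theorem depSubgroup_mono (hKH : K ≤ H) : DepSubgroup K ≤ DepSubgroup H :=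
  Subgroup.closure_mono fun _ => Depends.mono hKH

end Dependence

theorem depClosed_inter_general [Group F] (H G : Subgroup F)
    (hH : DepSubgroup H = H) (hG : DepSubgroup G = G) :
    DepSubgroup (H ⊓ G) = H ⊓ G := by
  refine le_antisymm ?_ (le_depSubgroup _)
  calc DepSubgroup (H ⊓ G) ≤ DepSubgroup H ⊓ DepSubgroup G :=
        le_inf (depSubgroup_mono inf_le_left) (depSubgroup_mono inf_le_right)
    _ = H ⊓ G := by rw [hH, hG]

/-- the intersection of two dependence-closed subgroups is
dependence-closed. -/
theorem depClosed_inter [Group F] [IsFreeGroup F] (H G : Subgroup F)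
    (hH : DepSubgroup H = H) (hG : DepSubgroup G = G) :
    DepSubgroup (H ⊓ G) = H ⊓ G :=
  depClosed_inter_general H G hH hG
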